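/- If (q,Z) =u=> (q',Z') in the local zone graph and u ~ w (equivalent up to swapping adjacent actions with disjoint domains), then (q,Z) =w=> (q',Z'): all equivalent interleavings lead to the same local zone. -/

import Mathlib

open Classical

/-- Comparison operators appearing in guards `x ~ c`. -/
inductive Cmp | lt | le | eq | ge | gt

def Cmp.sat : Cmp → ℝ → ℤ → Prop
  | .lt, r, c => r < (c : ℝ)
  | .le, r, c => r ≤ (c : ℝ)
  | .eq, r, c => r = (c : ℝ)
  | .ge, r, c => (c : ℝ) ≤ r
  | .gt, r, c => (c : ℝ) < r

/-- A guard: a finite conjunction of constraints `x ~ c` on clocks. -/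
abbrev Guard (Clock : Type) := List (Clock × Cmp × ℤ)

/-- A difference constraint `y₁ - y₂ ◁ c` over variables `V`;
the boolean is `true` for strict `<` and `false` for `≤`. -/
abbrev DiffConstraint (V : Type) := V × V × Bool × ℤ

/-- Satisfaction of a difference constraint. -/
def csat {V : Type} (v : V → ℝ) (c : DiffConstraint V) : Prop :=
  if c.2.2.1 then v c.1 - v c.2.1 < (c.2.2.2 : ℝ) else v c.1 - v c.2.1 ≤ (c.2.2.2 : ℝ)

/-- A network of timed automata: `k` processes, each owning its clocks and
locations; each action `b` has a domain `dom b` of synchronizing processes, and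
for each process in the domain a set of `b`-transitions (location, guard, reset
set, target location), whose guards and resets only mention own clocks. -/
structure Network where
  k : ℕ
  kpos : 0 < k
  Clock : Type
  [clockFin : Fintype Clock]
  owner : Clock → Fin k
  Act : Type
  dom : Act → Finset (Fin k)
  Loc : Fin k → Type
  init : ∀ p, Loc p
  Trans : ∀ (_ : Act) (p : Fin k), Set (Loc p × Guard Clock × Set Clock × Loc p)
  trans_wf : ∀ b p tr, tr ∈ Trans b p →
    (∀ c ∈ tr.2.1, owner c.1 = p) ∧ (∀ x ∈ tr.2.2.1, owner x = p)

attribute [instance] Network.clockFin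

namespace Network

variable (N : Network)

/-- Global (discrete) states of the network. -/
abbrev State := ∀ p, N.Loc p

/-- Variables of local valuations: offset variables `x̃` and reference clocks `t_p`. -/
abbrev LVar := N.Clock ⊕ Fin N.k

/-- Variables of global valuations: offset variables `x̃` and the global reference clock `t`. -/
abbrev GVar := N.Clock ⊕ Unit

abbrev LVal := N.LVar → ℝ

abbrev GVal := N.GVar → ℝ

/-- A local valuation: nonnegative, and each offset is below the owner's reference clock. -/
def IsLVal (v : N.LVal) : Prop :=
  (∀ y, 0 ≤ v y) ∧ ∀ x : N.Clock, v (.inl x) ≤ v (.inr (N.owner x))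

/-- A global valuation: nonnegative, and each offset is below the global time `t`. -/
def IsGVal (v : N.GVal) : Prop :=
  (∀ y, 0 ≤ v y) ∧ ∀ x : N.Clock, v (.inl x) ≤ v (.inr ())

/-- Satisfaction of a guard by a local valuation: the value of clock `x` is
`v t_p - v x̃` where `p` owns `x`. -/
def lgsat (v : N.LVal) (g : Guard N.Clock) : Prop :=
  ∀ c ∈ g, Cmp.sat c.2.1 (v (.inr (N.owner c.1)) - v (.inl c.1)) c.2.2

/-- Satisfaction of a guard by a global valuation: the value of clock `x` is `v t - v x̃`. -/
def ggsat (v : N.GVal) (g : Guard N.Clock) : Prop :=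
  ∀ c ∈ g, Cmp.sat c.2.1 (v (.inr ()) - v (.inl c.1)) c.2.2

/-- Global delay: only the global reference clock advances. -/
def gdelay (v : N.GVal) (δ : ℝ) : N.GVal :=
  fun y => match y with
    | .inl x => v (.inl x)
    | .inr _ => v (.inr ()) + δ

/-- `v'` is obtained from `v` by a (finite) sequence of local delays; equivalently,
each reference clock advances by some nonnegative amount, offsets are unchanged. -/
def ldelayed (v v' : N.LVal) : Prop :=
  ∃ δ : Fin N.k → ℝ, (∀ p, 0 ≤ δ p) ∧
    v' = fun y => match y with
      | .inl x => v (.inl x)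
      | .inr p => v (.inr p) + δ p

/-- Reset of the clocks in `R` in a global valuation. -/
noncomputable def greset (R : Set N.Clock) (v : N.GVal) : N.GVal :=
  fun y => match y with
    | .inl x => if x ∈ R then v (.inr ()) else v (.inl x)
    | .inr u => v (.inr u)

/-- Reset of the clocks in `R` in a local valuation: `x̃` is set to the local
time of the process owning `x`. -/
noncomputable def lreset (R : Set N.Clock) (v : N.LVal) : N.LVal :=
  fun y => match y with
    | .inl x => if x ∈ R then v (.inr (N.owner x)) else v (.inl x)
    | .inr p => v (.inr p)

/-- Global action step on action `b`. -/
def gact (b : N.Act) (c c' : N.State × N.GVal) : Prop :=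
  ∃ tr : ∀ p, p ∈ N.dom b → N.Loc p × Guard N.Clock × Set N.Clock × N.Loc p,
    (∀ p (h : p ∈ N.dom b),
      tr p h ∈ N.Trans b p ∧ (tr p h).1 = c.1 p ∧ (tr p h).2.2.2 = c'.1 p) ∧
    (∀ p, p ∉ N.dom b → c'.1 p = c.1 p) ∧
    (∀ p (h : p ∈ N.dom b), N.ggsat c.2 (tr p h).2.1) ∧
    c'.2 = N.greset {x | ∃ p h, x ∈ (tr p h).2.2.1} c.2

/-- Local action step on action `b`: additionally the reference clocks of the
processes in `dom b` must agree. -/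
def lact (b : N.Act) (c c' : N.State × N.LVal) : Prop :=
  ∃ tr : ∀ p, p ∈ N.dom b → N.Loc p × Guard N.Clock × Set N.Clock × N.Loc p,
    (∀ p (h : p ∈ N.dom b),
      tr p h ∈ N.Trans b p ∧ (tr p h).1 = c.1 p ∧ (tr p h).2.2.2 = c'.1 p) ∧
    (∀ p, p ∉ N.dom b → c'.1 p = c.1 p) ∧
    (∀ p ∈ N.dom b, ∀ p' ∈ N.dom b, c.2 (.inr p) = c.2 (.inr p')) ∧
    (∀ p (h : p ∈ N.dom b), N.lgsat c.2 (tr p h).2.1) ∧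
    c'.2 = N.lreset {x | ∃ p h, x ∈ (tr p h).2.2.1} c.2

/-- Global run on a word of actions: delays and action steps alternate,
starting and ending with a (possibly zero) delay. -/
inductive GRun : List N.Act → (N.State × N.GVal) → (N.State × N.GVal) → Prop
  | nil {q v} (δ : ℝ) (hδ : 0 ≤ δ) : GRun [] (q, v) (q, N.gdelay v δ)
  | cons {b u q v c1 c2} (δ : ℝ) (hδ : 0 ≤ δ)
      (hb : N.gact b (q, N.gdelay v δ) c1) (h : GRun u c1 c2) :
      GRun (b :: u) (q, v) c2

/-- Local run on a word of actions: sequences of local delays and local action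
steps alternate. -/
inductive LRun : List N.Act → (N.State × N.LVal) → (N.State × N.LVal) → Prop
  | nil {q v v'} (hd : N.ldelayed v v') : LRun [] (q, v) (q, v')
  | cons {b u q v v1 c1 c2} (hd : N.ldelayed v v1)
      (hb : N.lact b (q, v1) c1) (h : LRun u c1 c2) :
      LRun (b :: u) (q, v) c2

/-- Local run recording, for each action, its execution time: the common value
of the reference clocks of `dom b` when the step is taken. -/
inductive LRunT : List (N.Act × ℝ) → (N.State × N.LVal) → (N.State × N.LVal) → Prop
  | nil {q v v'} (hd : N.ldelayed v v') : LRunT [] (q, v) (q, v')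
  | cons {b θ u q v v1 c1 c2} (hd : N.ldelayed v v1)
      (hb : N.lact b (q, v1) c1) (hθ : ∀ p ∈ N.dom b, v1 (.inr p) = θ)
      (h : LRunT u c1 c2) :
      LRunT ((b, θ) :: u) (q, v) c2

/-- Equivalence of action sequences: generated by swapping adjacent actions
with disjoint domains. -/
inductive equiv : List N.Act → List N.Act → Prop
  | swap (u w : List N.Act) (a b : N.Act) (h : Disjoint (N.dom a) (N.dom b)) :
      equiv (u ++ a :: b :: w) (u ++ b :: a :: w)
  | refl (u : List N.Act) : equiv u u
  | trans {u v w} : equiv u v → equiv v w → equiv u w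

/-- A local valuation is synchronized if all reference clocks agree. -/
def Synchronized (v : N.LVal) : Prop :=
  ∀ p p' : Fin N.k, v (.inr p) = v (.inr p')

/-- The global valuation associated to a (synchronized) local valuation. -/
def toGlobal (v : N.LVal) : N.GVal :=
  fun y => match y with
    | .inl x => v (.inl x)
    | .inr _ => v (.inr ⟨0, N.kpos⟩)

/-- The synchronized local valuation associated to a global valuation. -/
def toLocal (v : N.GVal) : N.LVal :=
  fun y => match y with
    | .inl x => v (.inl x)
    | .inr _ => v (.inr ())

/-- The synchronized valuations of a set of local valuations. -/
def syncSet (S : Set N.LVal) : Set N.LVal := {v ∈ S | N.Synchronized v}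

/-- The set of local valuations defined by a list of difference constraints. -/
def lzset (L : List (DiffConstraint N.LVar)) : Set N.LVal :=
  {v | N.IsLVal v ∧ ∀ c ∈ L, csat v c}

/-- The set of global valuations defined by a list of difference constraints. -/
def gzset (L : List (DiffConstraint N.GVar)) : Set N.GVal :=
  {v | N.IsGVal v ∧ ∀ c ∈ L, csat v c}

/-- Local zones: sets of local valuations definable by difference constraints. -/
def IsLZone (S : Set N.LVal) : Prop := ∃ L, S = N.lzset L

/-- Global zones: sets of global valuations definable by difference constraints. -/
def IsGZone (S : Set N.GVal) : Prop := ∃ L, S = N.gzset L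

/-- Local-time elapse of a set of local valuations. -/
def lelapse (S : Set N.LVal) : Set N.LVal := {v' | ∃ v ∈ S, N.ldelayed v v'}

/-- Global time elapse of a set of global valuations. -/
def gelapse (S : Set N.GVal) : Set N.GVal :=
  {v' | ∃ v ∈ S, ∃ δ, 0 ≤ δ ∧ v' = N.gdelay v δ}

/-- Local zone graph step on action `b`:
`Z' = local-elapse([R](Z ∩ Z_g ∩ Z_sync))`, required nonempty. -/
def lzstep (b : N.Act) (c c' : N.State × Set N.LVal) : Prop :=
  ∃ tr : ∀ p, p ∈ N.dom b → N.Loc p × Guard N.Clock × Set N.Clock × N.Loc p,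
    (∀ p (h : p ∈ N.dom b),
      tr p h ∈ N.Trans b p ∧ (tr p h).1 = c.1 p ∧ (tr p h).2.2.2 = c'.1 p) ∧
    (∀ p, p ∉ N.dom b → c'.1 p = c.1 p) ∧
    c'.2 = N.lelapse ((N.lreset {x | ∃ p h, x ∈ (tr p h).2.2.1}) ''
      (c.2 ∩ {v | ∀ p (h : p ∈ N.dom b), N.lgsat v (tr p h).2.1}
           ∩ {v | ∀ p ∈ N.dom b, ∀ p' ∈ N.dom b, v (.inr p) = v (.inr p')})) ∧
    (c'.2).Nonempty

/-- Sequence of local zone graph steps along a word. -/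
inductive LZRun : List N.Act → (N.State × Set N.LVal) → (N.State × Set N.LVal) → Prop
  | nil (c) : LZRun [] c c
  | cons {b u c c1 c2} (hb : N.lzstep b c c1) (h : LZRun u c1 c2) :
      LZRun (b :: u) c c2

/-- The initial (discrete) state of the network. -/
def initState : N.State := N.init

/-- The initial global valuation: everything is `0`. -/
def gvalInit : N.GVal := fun _ => 0

/-- The initial local valuation: everything is `0`. -/
def lvalInit : N.LVal := fun _ => 0

/-- The initial node's zone in the local zone graph. -/
def lzoneInit : Set N.LVal := N.lelapse {N.lvalInit}

/-- State `q` is reachable in the global-time semantics. -/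
def GReach (q : N.State) : Prop :=
  ∃ u v, N.GRun u (N.initState, N.gvalInit) (q, v)

/-- State `q` is reachable in the local-time semantics. -/
def LReach (q : N.State) : Prop :=
  ∃ u v, N.LRun u (N.initState, N.lvalInit) (q, v)

/-- Time-abstract simulation between global valuations. -/
def TASim (sim : N.GVal → N.GVal → Prop) : Prop :=
  ∀ v1 v2, sim v1 v2 → ∀ q b δ1 q' v1', 0 ≤ δ1 →
    N.gact b (q, N.gdelay v1 δ1) (q', v1') →
    ∃ δ2, 0 ≤ δ2 ∧ ∃ v2', N.gact b (q, N.gdelay v2 δ2) (q', v2') ∧ sim v1' v2'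

end Network

/-- A local sync graph over a network `N`, based on an abstraction `abs` over
global zones: a subgraph of the local zone graph with covered/uncovered nodes,
satisfying conditions C0–C4. -/
structure SyncGraph (N : Network) (abs : Set N.GVal → Set N.GVal) where
  nodes : Set (N.State × Set N.LVal)
  covered : N.State × Set N.LVal → Prop
  edges : (N.State × Set N.LVal) → (N.State × Set N.LVal) → Prop
  edges_mem : ∀ s s', edges s s' → s ∈ nodes ∧ s' ∈ nodes
  edges_lzg : ∀ s s', edges s s' → ∃ b, N.lzstep b s s'
  init_mem : (N.initState, N.lzoneInit) ∈ nodes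
  init_unc : ¬ covered (N.initState, N.lzoneInit)
  reach : ∀ s ∈ nodes, Relation.ReflTransGen edges (N.initState, N.lzoneInit) s
  unc_succ : ∀ s ∈ nodes, ¬ covered s → ∀ b s', N.lzstep b s s' → edges s s'
  cov_sub : ∀ s ∈ nodes, covered s → ∃ s' ∈ nodes, ¬ covered s' ∧ s.1 = s'.1 ∧
    N.toGlobal '' N.syncSet s.2 ⊆ abs (N.toGlobal '' N.syncSet s'.2)
  cov_nosucc : ∀ s s', covered s → ¬ edges s s'

/-- A list of difference constraints is canonical (every constraint is tight):
no constraint is implied by the remaining ones. -/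
def canonicalL (N : Network) (L : List (DiffConstraint N.LVar)) : Prop :=
  ∀ c ∈ L, ∃ v, N.IsLVal v ∧ (∀ c' ∈ L, c' ≠ c → csat v c') ∧ ¬ csat v c

/-- Minea's region-like equivalence with maximal constant `cmax`. -/
def regEquiv {V : Type} (cmax : ℤ) (v1 v2 : V → ℝ) : Prop :=
  ∀ a b : V, (⌊v1 a - v1 b⌋ = ⌊v2 a - v2 b⌋) ∨
    (⌊v1 a - v1 b⌋ > cmax ∧ ⌊v2 a - v2 b⌋ > cmax) ∨
    (⌊v1 a - v1 b⌋ < -cmax ∧ ⌊v2 a - v2 b⌋ < -cmax)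

/-!
If `dom a` and `dom b` are disjoint, the guard, synchronisation constraint and resets of `a` only
read and write the variables owned by `dom a`, and those of `b` only the variables owned by `dom b`.
In a run `a · b` from a zone closed under local time elapse, the local delay `δ` taken between the
two steps splits into its part off `dom a`, which can be taken before `a` and hence before `b`, and
its part on `dom a`, which is invisible to `b` and can be postponed after `a`. So the two zone
successors commute. Swaps deeper inside a word follow, since every successor zone is again closed
under local time elapse.
-/

namespace Network

variable {N : Network}

def varOwner : N.LVar → Fin N.k := Sum.elim N.owner id

def ldelay (δ : Fin N.k → ℝ) (v : N.LVal) : N.LVal :=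
  Sum.elim (fun x => v (.inl x)) (fun p => v (.inr p) + δ p)

@[simp] lemma ldelay_inl (δ : Fin N.k → ℝ) (v : N.LVal) (x : N.Clock) :
    ldelay δ v (.inl x) = v (.inl x) := rfl

@[simp] lemma ldelay_inr (δ : Fin N.k → ℝ) (v : N.LVal) (p : Fin N.k) :
    ldelay δ v (.inr p) = v (.inr p) + δ p := rfl

@[simp] lemma lreset_inl (R : Set N.Clock) (v : N.LVal) (x : N.Clock) :
    N.lreset R v (.inl x) = if x ∈ R then v (.inr (N.owner x)) else v (.inl x) := rfl

@[simp] lemma lreset_inr (R : Set N.Clock) (v : N.LVal) (p : Fin N.k) :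
    N.lreset R v (.inr p) = v (.inr p) := rfl

lemma ldelay_zero (v : N.LVal) : ldelay 0 v = v := by
  funext y; cases y <;> simp

lemma ldelay_ldelay (δ₁ δ₂ : Fin N.k → ℝ) (v : N.LVal) :
    ldelay δ₂ (ldelay δ₁ v) = ldelay (δ₁ + δ₂) v := by
  funext y; cases y <;> simp [add_assoc]

lemma lreset_comm (R R' : Set N.Clock) (v : N.LVal) :
    N.lreset R (N.lreset R' v) = N.lreset R' (N.lreset R v) := by
  funext y
  cases y
  · simp only [lreset_inl, lreset_inr]
    split_ifs <;> rfl
  · rfl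

lemma lreset_ldelay_comm {R : Set N.Clock} {δ : Fin N.k → ℝ} (hδ : ∀ x ∈ R, δ (N.owner x) = 0)
    (v : N.LVal) : N.lreset R (ldelay δ v) = ldelay δ (N.lreset R v) := by
  funext y
  cases y with
  | inl x => by_cases hx : x ∈ R <;> simp [hx, hδ]
  | inr p => simp

lemma eqOn_ldelay {P : Set (Fin N.k)} {δ : Fin N.k → ℝ} (hδ : ∀ p ∈ P, δ p = 0) (v : N.LVal) :
    Set.EqOn (ldelay δ v) v (varOwner ⁻¹' P) := by
  rintro (x | p) hp
  · rfl
  · simp [hδ p hp]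

lemma eqOn_lreset {P : Set (Fin N.k)} {R : Set N.Clock} (hR : ∀ x ∈ R, N.owner x ∉ P)
    (v : N.LVal) : Set.EqOn (N.lreset R v) v (varOwner ⁻¹' P) := by
  rintro (x | p) hx
  · have hxR : x ∉ R := fun hxR => hR x hxR hx
    simp [hxR]
  · rfl

lemma mem_lelapse {S : Set N.LVal} {v' : N.LVal} :
    v' ∈ N.lelapse S ↔ ∃ v ∈ S, ∃ δ : Fin N.k → ℝ, 0 ≤ δ ∧ v' = ldelay δ v := by
  refine exists_congr fun v => and_congr_right fun _ => ?_
  constructor <;> rintro ⟨δ, hδ, rfl⟩ <;> exact ⟨δ, hδ, by funext y; cases y <;> rfl⟩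

lemma ldelay_mem_lelapse {S : Set N.LVal} {v : N.LVal} (hv : v ∈ S) {δ : Fin N.k → ℝ}
    (hδ : 0 ≤ δ) : ldelay δ v ∈ N.lelapse S :=
  mem_lelapse.2 ⟨v, hv, δ, hδ, rfl⟩

lemma subset_lelapse (S : Set N.LVal) : S ⊆ N.lelapse S := fun v hv => by
  simpa [ldelay_zero] using ldelay_mem_lelapse hv le_rfl

lemma lelapse_lelapse (S : Set N.LVal) : N.lelapse (N.lelapse S) = N.lelapse S := by
  refine Set.Subset.antisymm ?_ (subset_lelapse _)
  intro v hv
  obtain ⟨_, hv₁, δ₂, hδ₂, rfl⟩ := mem_lelapse.1 hv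
  obtain ⟨v₀, hv₀, δ₁, hδ₁, rfl⟩ := mem_lelapse.1 hv₁
  rw [ldelay_ldelay]
  exact ldelay_mem_lelapse hv₀ (add_nonneg hδ₁ hδ₂)

def DependsOn (P : Set (Fin N.k)) (S : Set N.LVal) : Prop :=
  ∀ ⦃v w⦄, Set.EqOn v w (varOwner ⁻¹' P) → v ∈ S → w ∈ S

lemma DependsOn.inter {P : Set (Fin N.k)} {S T : Set N.LVal} (hS : DependsOn P S)
    (hT : DependsOn P T) : DependsOn P (S ∩ T) :=
  fun _ _ hvw hv => ⟨hS hvw hv.1, hT hvw hv.2⟩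

def lzpost (R : Set N.Clock) (G Z : Set N.LVal) : Set N.LVal :=
  N.lelapse (N.lreset R '' (Z ∩ G))

lemma _root_.Set.Nonempty.of_lzpost {R : Set N.Clock} {G Z : Set N.LVal}
    (h : (lzpost R G Z).Nonempty) : Z.Nonempty := by
  obtain ⟨_, _, ⟨v, hv, rfl⟩, _⟩ := h
  exact ⟨v, hv.1⟩

lemma lzpost_lzpost_subset {A B : Set (Fin N.k)} (hAB : Disjoint A B)
    {Ra Rb : Set N.Clock} (hRa : ∀ x ∈ Ra, N.owner x ∈ A) (hRb : ∀ x ∈ Rb, N.owner x ∈ B)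
    {Ga Gb : Set N.LVal} (hGa : DependsOn A Ga) (hGb : DependsOn B Gb)
    {Z : Set N.LVal} (hZ : N.lelapse Z = Z) :
    lzpost Rb Gb (lzpost Ra Ga Z) ⊆ lzpost Ra Ga (lzpost Rb Gb Z) := by
  intro v hv
  obtain ⟨_, ⟨w, ⟨hw, hwGb⟩, rfl⟩, ε, hε, rfl⟩ := mem_lelapse.1 hv
  obtain ⟨_, ⟨u, ⟨huZ, huGa⟩, rfl⟩, δ, hδ, rfl⟩ := mem_lelapse.1 hw
  replace hδ : ∀ p, 0 ≤ δ p := hδ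
  set δout : Fin N.k → ℝ := fun p => if p ∈ A then 0 else δ p
  set δin : Fin N.k → ℝ := fun p => if p ∈ A then δ p else 0
  have hδout : ∀ p ∈ A, δout p = 0 := fun p hp => if_pos hp
  have hδin : ∀ p ∈ B, δin p = 0 := fun p hp => if_neg (Set.disjoint_right.1 hAB hp)
  set u' := ldelay δout u with hu'
  have hu'Z : u' ∈ Z :=
    hZ ▸ ldelay_mem_lelapse huZ fun p => by by_cases hp : p ∈ A <;> simp [δout, hp, hδ p]
  have hw : ldelay δ (N.lreset Ra u) = ldelay δin (N.lreset Ra u') := by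
    rw [hu', lreset_ldelay_comm fun x hx => hδout _ (hRa x hx), ldelay_ldelay]
    congr 1; funext p; by_cases hp : p ∈ A <;> simp [δout, δin, hp]
  rw [hw] at hwGb ⊢
  have hu'Gb : u' ∈ Gb := hGb ((eqOn_ldelay hδin _).trans
    (eqOn_lreset (fun x hx => Set.disjoint_left.1 hAB (hRa x hx)) u')) hwGb
  have hyGa : N.lreset Rb u' ∈ Ga := hGa ((eqOn_lreset
    (fun x hx => Set.disjoint_right.1 hAB (hRb x hx)) u').trans (eqOn_ldelay hδout u)).symm huGa
  rw [lreset_ldelay_comm fun x hx => hδin _ (hRb x hx), ldelay_ldelay, lreset_comm]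
  have hy : N.lreset Rb u' ∈ lzpost Rb Gb Z :=
    subset_lelapse _ (Set.mem_image_of_mem _ ⟨hu'Z, hu'Gb⟩)
  refine ldelay_mem_lelapse (S := N.lreset Ra '' (lzpost Rb Gb Z ∩ Ga)) ⟨_, ⟨hy, hyGa⟩, rfl⟩ ?_
  exact fun p => add_nonneg (by by_cases hp : p ∈ A <;> simp [δin, hp, hδ p]) (hε p)

lemma lzpost_comm {A B : Set (Fin N.k)} (hAB : Disjoint A B)
    {Ra Rb : Set N.Clock} (hRa : ∀ x ∈ Ra, N.owner x ∈ A) (hRb : ∀ x ∈ Rb, N.owner x ∈ B)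
    {Ga Gb : Set N.LVal} (hGa : DependsOn A Ga) (hGb : DependsOn B Gb)
    {Z : Set N.LVal} (hZ : N.lelapse Z = Z) :
    lzpost Rb Gb (lzpost Ra Ga Z) = lzpost Ra Ga (lzpost Rb Gb Z) :=
  (lzpost_lzpost_subset hAB hRa hRb hGa hGb hZ).antisymm
    (lzpost_lzpost_subset hAB.symm hRb hRa hGb hGa hZ)

abbrev TransChoice (b : N.Act) :=
  ∀ p, p ∈ N.dom b → N.Loc p × Guard N.Clock × Set N.Clock × N.Loc p

def IsLocStep (b : N.Act) (tr : TransChoice b) (q q' : N.State) : Prop :=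
  (∀ p (h : p ∈ N.dom b), tr p h ∈ N.Trans b p ∧ (tr p h).1 = q p ∧ (tr p h).2.2.2 = q' p) ∧
    ∀ p, p ∉ N.dom b → q' p = q p

def resetSet {b : N.Act} (tr : TransChoice b) : Set N.Clock :=
  {x | ∃ p h, x ∈ (tr p h).2.2.1}

def enabledSet (b : N.Act) (tr : TransChoice b) : Set N.LVal :=
  {v | ∀ p (h : p ∈ N.dom b), N.lgsat v (tr p h).2.1} ∩
    {v | ∀ p ∈ N.dom b, ∀ p' ∈ N.dom b, v (.inr p) = v (.inr p')}

lemma lzstep_iff {b : N.Act} {q q' : N.State} {Z Z' : Set N.LVal} :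
    N.lzstep b (q, Z) (q', Z') ↔ ∃ tr : TransChoice b, IsLocStep b tr q q' ∧
      Z' = lzpost (resetSet tr) (enabledSet b tr) Z ∧ Z'.Nonempty := by
  simp only [lzstep, IsLocStep, lzpost, resetSet, enabledSet, Set.inter_assoc, and_assoc]

lemma lelapse_of_lzstep {b : N.Act} {c c' : N.State × Set N.LVal} (h : N.lzstep b c c') :
    N.lelapse c'.2 = c'.2 := by
  obtain ⟨_, _, _, hZ', _⟩ := h
  rw [hZ']
  exact lelapse_lelapse _

lemma IsLocStep.comm {a b : N.Act} (hab : Disjoint (N.dom a) (N.dom b))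
    {tra : TransChoice a} {trb : TransChoice b} {q q₁ q₂ : N.State}
    (ha : IsLocStep a tra q q₁) (hb : IsLocStep b trb q₁ q₂) :
    ∃ q₁', IsLocStep b trb q q₁' ∧ IsLocStep a tra q₁' q₂ := by
  have hq₁ : ∀ p ∈ N.dom b, q₁ p = q p := fun p hp => ha.2 p (Finset.disjoint_right.1 hab hp)
  have hq₂ : ∀ p ∈ N.dom a, q₂ p = q₁ p := fun p hp => hb.2 p (Finset.disjoint_left.1 hab hp)
  refine ⟨fun p => if p ∈ N.dom b then q₂ p else q p, ⟨fun p hp => ?_, fun p hp => ?_⟩,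
    ⟨fun p hp => ?_, fun p hp => ?_⟩⟩
  · obtain ⟨htr, hsrc, htgt⟩ := hb.1 p hp
    exact ⟨htr, hsrc.trans (hq₁ p hp), by simp [hp, htgt]⟩
  · simp [hp]
  · obtain ⟨htr, hsrc, htgt⟩ := ha.1 p hp
    exact ⟨htr, by simp [Finset.disjoint_left.1 hab hp, hsrc], htgt.trans (hq₂ p hp).symm⟩
  · by_cases hpb : p ∈ N.dom b
    · simp [hpb]
    · simp [hpb, hb.2 p hpb, ha.2 p hp]

lemma owner_mem_dom_of_mem_resetSet {b : N.Act} {tr : TransChoice b}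
    (htr : ∀ p h, tr p h ∈ N.Trans b p) : ∀ x ∈ resetSet tr, N.owner x ∈ N.dom b := by
  rintro x ⟨p, h, hx⟩
  rw [(N.trans_wf b p _ (htr p h)).2 x hx]
  exact h

lemma dependsOn_enabledSet {b : N.Act} {tr : TransChoice b}
    (htr : ∀ p h, tr p h ∈ N.Trans b p) : DependsOn (↑(N.dom b)) (enabledSet b tr) := by
  refine DependsOn.inter (fun v w hvw hv p h c hc => ?_) (fun v w hvw hv p hp p' hp' => ?_)
  · have hown : N.owner c.1 ∈ N.dom b := by rwa [(N.trans_wf b p _ (htr p h)).1 c hc]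
    have := hv p h c hc
    rwa [hvw (show N.owner c.1 ∈ _ from hown), hvw (show N.owner c.1 ∈ _ from hown)] at this
  · rw [← hvw (show p ∈ _ from hp), ← hvw (show p' ∈ _ from hp')]
    exact hv p hp p' hp'

lemma lzstep_comm {a b : N.Act} (hab : Disjoint (N.dom a) (N.dom b)) {q : N.State}
    {Z : Set N.LVal} (hZ : N.lelapse Z = Z) {c₁ c₂ : N.State × Set N.LVal}
    (ha : N.lzstep a (q, Z) c₁) (hb : N.lzstep b c₁ c₂) :
    ∃ c₁', N.lzstep b (q, Z) c₁' ∧ N.lzstep a c₁' c₂ := by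
  obtain ⟨q₁, Z₁⟩ := c₁
  obtain ⟨q₂, Z₂⟩ := c₂
  obtain ⟨tra, hla, rfl, -⟩ := lzstep_iff.1 ha
  obtain ⟨trb, hlb, rfl, hne⟩ := lzstep_iff.1 hb
  obtain ⟨q₁', hlb', hla'⟩ := hla.comm hab hlb
  have htra : ∀ p h, tra p h ∈ N.Trans a p := fun p h => (hla.1 p h).1
  have htrb : ∀ p h, trb p h ∈ N.Trans b p := fun p h => (hlb.1 p h).1
  have hcomm := lzpost_comm (Finset.disjoint_coe.2 hab) (owner_mem_dom_of_mem_resetSet htra)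
    (owner_mem_dom_of_mem_resetSet htrb) (dependsOn_enabledSet htra) (dependsOn_enabledSet htrb) hZ
  rw [hcomm] at hne ⊢
  exact ⟨_, lzstep_iff.2 ⟨trb, hlb', rfl, hne.of_lzpost⟩, lzstep_iff.2 ⟨tra, hla', rfl, hne⟩⟩

lemma LZRun.swap {a b : N.Act} (hab : Disjoint (N.dom a) (N.dom b)) (u : List N.Act)
    {w : List N.Act} {q : N.State} {Z : Set N.LVal} {c : N.State × Set N.LVal}
    (hZ : N.lelapse Z = Z) (hr : N.LZRun (u ++ a :: b :: w) (q, Z) c) :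
    N.LZRun (u ++ b :: a :: w) (q, Z) c := by
  induction u generalizing q Z with
  | nil =>
    obtain _ | ⟨ha, _ | ⟨hb, hr⟩⟩ := hr
    obtain ⟨c₁', hb', ha'⟩ := lzstep_comm hab hZ ha hb
    exact .cons hb' (.cons ha' hr)
  | cons x u ih =>
    obtain _ | ⟨hx, hr⟩ := hr
    exact .cons hx (ih (lelapse_of_lzstep hx) hr)

end Network

theorem stmt13_general (N : Network) (u w : List N.Act) (h : N.equiv u w)
    (q q' : N.State) (Z Z' : Set N.LVal) (hte : Z = N.lelapse Z)
    (hr : N.LZRun u (q, Z) (q', Z')) : N.LZRun w (q, Z) (q', Z') := by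
  induction h with
  | swap u w a b hab => exact Network.LZRun.swap hab u hte.symm hr
  | refl u => exact hr
  | trans _ _ ih₁ ih₂ => exact ih₂ (ih₁ hr)

theorem stmt13 (N : Network) (u w : List N.Act) (h : N.equiv u w)
    (q q' : N.State) (Z Z' : Set N.LVal) (hZ : N.IsLZone Z) (hte : Z = N.lelapse Z)
    (hr : N.LZRun u (q, Z) (q', Z')) : N.LZRun w (q, Z) (q', Z') :=
  stmt13_general N u w h q q' Z Z' hte hr
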